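/- arXiv:2303.15927 — 5 statements merged into one kernel-verified Lean document; each statement's English description precedes it below -/
import Mathlib

section
/- Let g be a finite-dimensional complex Lie algebra and let (e,h,f) be an sl₂-triple in g. If the Lie subalgebra of g generated by g(1)_e is equal to g(≥1)_e, then e is reachable, i.e. e ∈ [g_e, g_e]. -/
namespace PaperStmt

open LieAlgebra Module

variable (R : Type*) {L : Type*} [CommRing R] [LieRing L] [LieAlgebra R L]

/-- The centralizer `g_x = {y ∈ g | ⁅y, x⁆ = 0}` of an element of a Lie algebra,
as a Lie subalgebra. -/
def centralizerOf (x : L) : LieSubalgebra R L where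
  carrier := {y : L | ⁅y, x⁆ = 0}
  add_mem' := fun {a b} (ha : ⁅a, x⁆ = 0) (hb : ⁅b, x⁆ = 0) => by
    show ⁅a + b, x⁆ = 0
    rw [add_lie, ha, hb, add_zero]
  zero_mem' := zero_lie x
  smul_mem' := fun c a (ha : ⁅a, x⁆ = 0) => by
    show ⁅c • a, x⁆ = 0
    rw [smul_lie, ha, smul_zero]
  lie_mem' := fun {a b} (ha : ⁅a, x⁆ = 0) (hb : ⁅b, x⁆ = 0) => by
    show ⁅⁅a, b⁆, x⁆ = 0
    rw [lie_lie, ha, hb, lie_zero, lie_zero, sub_zero]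

/-- The subspace spanned by the brackets `⁅x, y⁆` with `x ∈ A`, `y ∈ B`. -/
def bracketSpan (A B : Submodule R L) : Submodule R L :=
  Submodule.span R {z : L | ∃ x ∈ A, ∃ y ∈ B, z = ⁅x, y⁆}

/-- The derived subalgebra `[k, k]` of a Lie subalgebra `k`, as a subspace of the
ambient Lie algebra: the span of all brackets `⁅a, b⁆` with `a, b ∈ k`. -/
def derivedOf (K : LieSubalgebra R L) : Submodule R L :=
  bracketSpan R K.toSubmodule K.toSubmodule

/-- An element `e` of a Lie algebra is reachable if `e ∈ [g_e, g_e]`. -/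
def IsReachable (e : L) : Prop :=
  e ∈ derivedOf R (centralizerOf R e)

/-- `g(k)`, the `k`-eigenspace of `ad h`. -/
def gradePiece (h : L) (k : ℤ) : Submodule R L :=
  Module.End.eigenspace (LieAlgebra.ad R L h) (k : R)

/-- `g(k)_e = g(k) ∩ g_e`. -/
def gradePieceCent (e h : L) (k : ℤ) : Submodule R L :=
  gradePiece R h k ⊓ (centralizerOf R e).toSubmodule

/-- `g(≥1)_e`, the sum of the subspaces `g(k)_e` over all `k ≥ 1`. -/
def gradeGeOneCent (e h : L) : Submodule R L :=
  ⨆ k ∈ {k : ℤ | 1 ≤ k}, gradePieceCent R e h k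

/-- If the Lie subalgebra generated by `g(1)_e` equals `g(≥1)_e`, then `e` is
reachable, i.e. `e ∈ [g_e, g_e]`. -/
theorem isReachable_of_lieSpan_eq {L : Type*} [LieRing L] [LieAlgebra ℂ L]
    [FiniteDimensional ℂ L] (e h f : L) (t : IsSl2Triple h e f)
    (hgen : (LieSubalgebra.lieSpan ℂ L (gradePieceCent ℂ e h 1 : Set L)).toSubmodule
      = gradeGeOneCent ℂ e h) :
    IsReachable ℂ e := by
  classical
  set K := LieSubalgebra.lieSpan ℂ L (gradePieceCent ℂ e h 1 : Set L) with hK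
  -- K is contained in the centralizer of e
  have hKcent : K ≤ centralizerOf ℂ e := by
    rw [LieSubalgebra.lieSpan_le]
    intro x hx
    exact hx.2
  set D := derivedOf ℂ K with hD
  have hDK : D ≤ K.toSubmodule := by
    apply Submodule.span_le.mpr
    rintro z ⟨x, hx, y, hy, rfl⟩
    exact K.lie_mem hx hy
  have hPK : gradePieceCent ℂ e h 1 ≤ K.toSubmodule :=
    fun x hx => LieSubalgebra.subset_lieSpan hx
  have hsupK : gradePieceCent ℂ e h 1 ⊔ D ≤ K.toSubmodule := sup_le hPK hDK
  -- the submodule g(1)_e + [K,K] is a Lie subalgebra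
  let M : LieSubalgebra ℂ L :=
    { toSubmodule := gradePieceCent ℂ e h 1 ⊔ D
      lie_mem' := fun {a b} ha hb => by
        have hab : ⁅a, b⁆ ∈ D :=
          Submodule.subset_span ⟨a, hsupK ha, b, hsupK hb, rfl⟩
        exact Submodule.mem_sup_right hab }
  have hKM : K ≤ M := by
    rw [hK, LieSubalgebra.lieSpan_le]
    intro x hx
    exact Submodule.mem_sup_left hx
  -- e lies in g(2)
  have he2 : e ∈ gradePiece ℂ h 2 := by
    rw [gradePiece, Module.End.mem_eigenspace_iff]
    have := t.lie_h_e_nsmul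
    rw [LieAlgebra.ad_apply, this]
    push_cast
    rw [two_smul, two_smul]
  have heP : e ∈ gradePieceCent ℂ e h 2 := ⟨he2, lie_self e⟩
  have heK : e ∈ K.toSubmodule := by
    rw [hgen, gradeGeOneCent]
    exact Submodule.mem_iSup_of_mem 2 (Submodule.mem_iSup_of_mem (show (2:ℤ) ∈ {k : ℤ | 1 ≤ k} by norm_num) heP)
  have heM : e ∈ gradePieceCent ℂ e h 1 ⊔ D := hKM heK
  obtain ⟨s, hs, b, hb, hsb⟩ := Submodule.mem_sup.mp heM
  -- eigenspace machinery: N2 = span of eigenspaces with eigenvalue ≥ 2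
  set N2 : Submodule ℂ L := ⨆ k : {k : ℤ // 2 ≤ k}, gradePiece ℂ h (k : ℤ) with hN2
  have hbr : ∀ (j k : ℤ), 1 ≤ j → 1 ≤ k → ∀ x ∈ gradePiece ℂ h j,
      ∀ y ∈ gradePiece ℂ h k, ⁅x, y⁆ ∈ N2 := by
    intro j k hj hk x hx y hy
    have hxy : ⁅x, y⁆ ∈ gradePiece ℂ h (j + k) := by
      rw [gradePiece, Module.End.mem_eigenspace_iff] at hx hy ⊢
      rw [LieAlgebra.ad_apply] at hx hy ⊢
      rw [leibniz_lie, hx, hy, smul_lie, lie_smul, Int.cast_add, add_smul]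
    exact Submodule.mem_iSup_of_mem ⟨j + k, by omega⟩ hxy
  have key : ∀ x ∈ gradeGeOneCent ℂ e h, ∀ y ∈ gradeGeOneCent ℂ e h, ⁅x, y⁆ ∈ N2 := by
    intro x hx
    rw [gradeGeOneCent, iSup_subtype'] at hx
    refine Submodule.iSup_induction _ (motive := fun x => ∀ y ∈ gradeGeOneCent ℂ e h, ⁅x, y⁆ ∈ N2)
      hx ?_ ?_ ?_
    · rintro ⟨j, hj⟩ x hxj y hy
      rw [gradeGeOneCent, iSup_subtype'] at hy
      refine Submodule.iSup_induction _ (motive := fun y => ⁅x, y⁆ ∈ N2) hy ?_ ?_ ?_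
      · rintro ⟨k, hk⟩ y hyk
        exact hbr j k hj hk x hxj.1 y hyk.1
      · show ⁅x, (0 : L)⁆ ∈ N2
        rw [lie_zero]; exact N2.zero_mem
      · intro y₁ y₂ h1 h2
        show ⁅x, y₁ + y₂⁆ ∈ N2
        rw [lie_add]; exact N2.add_mem h1 h2
    · intro y _
      show ⁅(0 : L), y⁆ ∈ N2
      rw [zero_lie]; exact N2.zero_mem
    · intro x₁ x₂ h1 h2 y hy
      show ⁅x₁ + x₂, y⁆ ∈ N2
      rw [add_lie]; exact N2.add_mem (h1 y hy) (h2 y hy)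
  have hDN2 : D ≤ N2 := by
    apply Submodule.span_le.mpr
    rintro z ⟨x, hx, y, hy, rfl⟩
    simp only [SetLike.mem_coe] at hx hy ⊢
    rw [hgen] at hx hy
    exact key x hx y hy
  have heN2 : e ∈ N2 := Submodule.mem_iSup_of_mem ⟨2, le_refl 2⟩ he2
  have hsN2 : s ∈ N2 := by
    have : s = e - b := by rw [← hsb]; exact (add_sub_cancel_right s b).symm
    rw [this]
    exact N2.sub_mem heN2 (hDN2 hb)
  -- N2 is disjoint from the 1-eigenspace
  have hN2le : N2 ≤ ⨆ μ ∈ {μ : ℂ | μ ≠ 1}, Module.End.eigenspace (LieAlgebra.ad ℂ L h) μ := by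
    apply iSup_le
    rintro ⟨k, hk⟩
    have hkne : ((k : ℤ) : ℂ) ≠ 1 := by
      intro hcontra
      have : (k : ℤ) = 1 := by exact_mod_cast hcontra
      omega
    exact le_iSup₂ (f := fun μ (_ : μ ∈ {μ : ℂ | μ ≠ 1}) =>
      Module.End.eigenspace (LieAlgebra.ad ℂ L h) μ) ((k : ℤ) : ℂ) hkne
  have hdisj : Disjoint (Module.End.eigenspace (LieAlgebra.ad ℂ L h) (1 : ℂ)) N2 := by
    refine Disjoint.mono_right hN2le ?_
    exact Module.End.eigenspaces_iSupIndep (LieAlgebra.ad ℂ L h) (1 : ℂ)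
  have hs1 : s ∈ Module.End.eigenspace (LieAlgebra.ad ℂ L h) (1 : ℂ) := by
    have := hs.1
    rw [gradePiece] at this
    simpa using this
  have hs0 : s = 0 := Submodule.disjoint_def.mp hdisj s hs1 hsN2
  have heb : e = b := by rw [← hsb, hs0, zero_add]
  -- conclude
  have hmono : D ≤ derivedOf ℂ (centralizerOf ℂ e) := by
    refine Submodule.span_mono ?_
    rintro z ⟨x, hx, y, hy, rfl⟩
    exact ⟨x, hKcent hx, y, hKcent hy, rfl⟩
  have heD : e ∈ D := by rw [heb]; exact hb
  exact hmono heD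

end PaperStmt
end

section
/- Let g be a finite-dimensional semisimple complex Lie algebra and let e ∈ g satisfy e ∈ [g_e, g_e], where g_e is the centralizer of e in g. Then e is nilpotent, i.e. the adjoint endomorphism ad e : g → g is a nilpotent linear map. -/
namespace PaperStmt

open LieAlgebra Module

variable (R : Type*) {L : Type*} [CommRing R] [LieRing L] [LieAlgebra R L]

/-- If all power sums (with nonzero coefficients) over a finite set of complex numbers
vanish, every element of the set is zero. -/
lemma aux_powerSums {s : Finset ℂ} {d : ℂ → ℂ} (hd : ∀ μ ∈ s, d μ ≠ 0)
    (h : ∀ k : ℕ, 1 ≤ k → ∑ μ ∈ s, d μ * μ ^ k = 0) : ∀ μ ∈ s, μ = 0 := by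
  classical
  set t : Finset ℂ := s.filter (· ≠ 0) with ht
  have hts : ∀ k : ℕ, 1 ≤ k → ∑ μ ∈ t, d μ * μ ^ k = 0 := by
    intro k hk
    have := Finset.sum_filter_of_ne (s := s) (f := fun μ => d μ * μ ^ k) (p := (· ≠ 0))
      (fun μ hμ hne h0 => hne (by show d μ * μ ^ k = 0; rw [h0, zero_pow (by omega), mul_zero]))
    rw [ht, this, h k hk]
  by_contra hcon
  push_neg at hcon
  obtain ⟨μ₀, hμ₀s, hμ₀⟩ := hcon
  have hμ₀t : μ₀ ∈ t := Finset.mem_filter.mpr ⟨hμ₀s, hμ₀⟩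
  set m := t.card with hm
  set e := t.equivFin.symm with he
  set v : Fin m → ℂ := fun i => (e i : ℂ) with hv
  have hvinj : Function.Injective v := by
    intro i j hij
    exact e.injective (Subtype.ext hij)
  have hvne : ∀ i, v i ≠ 0 := fun i => (Finset.mem_filter.mp (e i).2).2
  set B : Matrix (Fin m) (Fin m) ℂ := Matrix.of fun i j => v j ^ (i.val + 1) with hB
  have hdet : B.det ≠ 0 := by
    have hBt : B.transpose = Matrix.diagonal v * Matrix.vandermonde v := by
      ext i j
      simp [hB, Matrix.mul_apply, Matrix.diagonal, Matrix.vandermonde, pow_succ, mul_comm,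
        Finset.sum_ite_eq, Matrix.transpose_apply]
    have : B.transpose.det ≠ 0 := by
      rw [hBt, Matrix.det_mul, Matrix.det_diagonal]
      refine mul_ne_zero (Finset.prod_ne_zero_iff.mpr fun i _ => hvne i) ?_
      rw [Matrix.det_vandermonde_ne_zero_iff]
      exact hvinj
    rwa [Matrix.det_transpose] at this
  set c : Fin m → ℂ := fun j => d (v j) with hc
  have hmv : B.mulVec c = 0 := by
    funext i
    have : ∑ μ ∈ t, d μ * μ ^ (i.val + 1) = 0 := hts _ (by omega)
    rw [← Finset.sum_coe_sort] at this
    rw [← Equiv.sum_comp e (fun x : t => d (x : ℂ) * (x : ℂ) ^ (i.val + 1))] at this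
    simpa [Matrix.mulVec, dotProduct, hB, hc, mul_comm] using this
  have : c = 0 := Matrix.eq_zero_of_mulVec_eq_zero hdet hmv
  have hμ0 : d μ₀ = 0 := by
    have hi : c (e.symm ⟨μ₀, hμ₀t⟩) = 0 := by rw [this]; rfl
    simpa [hc, hv] using hi
  exact hd μ₀ hμ₀s hμ0

lemma aux_mapsTo_pow {R V : Type*} [CommRing R] [AddCommGroup V] [Module R V]
    (f : Module.End R V) {p : Submodule R V} (hf : Set.MapsTo f p p) (n : ℕ) :
    Set.MapsTo (f ^ n) p p := by
  induction n with
  | zero => intro x hx; simpa using hx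
  | succ n ih =>
    intro x hx
    have hx' : (f ^ (n+1)) x = (f ^ n) (f x) := by
      rw [pow_succ, Module.End.mul_apply]
    rw [hx']
    exact ih (hf hx)

lemma aux_restrict_pow_trace {V : Type*} [AddCommGroup V] [Module ℂ V] [FiniteDimensional ℂ V]
    (f : Module.End ℂ V) (μ : ℂ) {p : Submodule ℂ V} (hf : Set.MapsTo f p p)
    (hnil : IsNilpotent (f.restrict hf - algebraMap ℂ _ μ)) (k : ℕ)
    (hfk : Set.MapsTo (f ^ k) p p) :
    LinearMap.trace ℂ _ ((f ^ k).restrict hfk) = μ ^ k * (finrank ℂ p : ℂ) := by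
  induction k with
  | zero =>
    have h1 : ((f ^ 0).restrict hfk) = LinearMap.id (R := ℂ) (M := p) := by
      ext x; simp [LinearMap.restrict_apply]
    rw [h1]
    simp [LinearMap.trace_id]
  | succ k ih =>
    have hfk' : Set.MapsTo (f ^ k) p p := aux_mapsTo_pow f hf k
    have hcomp : ((f ^ (k+1)).restrict hfk) = ((f ^ k).restrict hfk') ∘ₗ (f.restrict hf) := by
      ext x
      simp [LinearMap.restrict_apply, pow_succ, Module.End.mul_apply]
      rfl
    rw [hcomp, LinearMap.trace_comp_eq_mul_of_commute_of_isNilpotent μ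
      (LinearMap.restrict_commute (Commute.pow_left rfl k) hfk' hf) hnil, ih hfk']
    ring

lemma aux_isNilpotent_of_trace_pow {V : Type*} [AddCommGroup V] [Module ℂ V]
    [FiniteDimensional ℂ V] (f : Module.End ℂ V)
    (h : ∀ k : ℕ, 1 ≤ k → LinearMap.trace ℂ V (f ^ k) = 0) : IsNilpotent f := by
  classical
  have hsup : ⨆ μ, f.maxGenEigenspace μ = ⊤ := f.iSup_maxGenEigenspace_eq_top
  have hds := DirectSum.isInternal_submodule_of_iSupIndep_of_iSup_eq_top
    f.independent_maxGenEigenspace hsup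
  have h_fin : {μ : ℂ | f.maxGenEigenspace μ ≠ ⊥}.Finite :=
    WellFoundedGT.finite_ne_bot_of_iSupIndep f.independent_maxGenEigenspace
  have hmaps : ∀ (k : ℕ) (μ : ℂ), Set.MapsTo (f ^ k) (f.maxGenEigenspace μ) (f.maxGenEigenspace μ) :=
    fun k μ => Module.End.mapsTo_maxGenEigenspace_of_comm (Commute.pow_right rfl k) μ
  have hf1 : ∀ μ : ℂ, Set.MapsTo f (f.maxGenEigenspace μ) (f.maxGenEigenspace μ) :=
    fun μ => Module.End.mapsTo_maxGenEigenspace_of_comm rfl μ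
  have hnil : ∀ μ : ℂ, IsNilpotent (f.restrict (hf1 μ) - algebraMap ℂ _ μ) := by
    intro μ
    have hsubm : Set.MapsTo (f - algebraMap ℂ (Module.End ℂ V) μ)
        (f.maxGenEigenspace μ) (f.maxGenEigenspace μ) :=
      Module.End.mapsTo_maxGenEigenspace_of_comm
        (Algebra.mul_sub_algebraMap_commutes f μ) μ
    have h1 := f.isNilpotent_restrict_maxGenEigenspace_sub_algebraMap μ hsubm
    have h2 : (f - algebraMap ℂ (Module.End ℂ V) μ).restrict hsubm =
        f.restrict (hf1 μ) - algebraMap ℂ _ μ := by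
      ext x
      simp [LinearMap.restrict_apply, Module.algebraMap_end_apply]
      rfl
    rwa [h2] at h1
  -- the trace of f^k as a power sum over eigenvalues
  have htr : ∀ k : ℕ, 1 ≤ k →
      ∑ μ ∈ h_fin.toFinset, (finrank ℂ (f.maxGenEigenspace μ) : ℂ) * μ ^ k = 0 := by
    intro k hk
    have ht := LinearMap.trace_eq_sum_trace_restrict' hds h_fin (hmaps k)
    rw [h k hk] at ht
    have h2 : ∑ μ ∈ h_fin.toFinset, (finrank ℂ (f.maxGenEigenspace μ) : ℂ) * μ ^ k =
        ∑ μ ∈ h_fin.toFinset,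
          LinearMap.trace ℂ _ ((f ^ k).restrict (hmaps k μ)) :=
      Finset.sum_congr rfl fun μ _ => by
        rw [aux_restrict_pow_trace f μ (hf1 μ) (hnil μ) k (hmaps k μ)]; ring
    rw [h2]
    exact ht.symm
  -- all eigenvalues are zero
  have hzero : ∀ μ ∈ h_fin.toFinset, μ = (0 : ℂ) := by
    apply aux_powerSums (d := fun μ => (finrank ℂ (f.maxGenEigenspace μ) : ℂ))
    · intro μ hμ
      have hμ' : f.maxGenEigenspace μ ≠ ⊥ := by simpa using hμ
      have : finrank ℂ (f.maxGenEigenspace μ) ≠ 0 := by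
        simpa [Submodule.finrank_eq_zero] using hμ'
      exact_mod_cast Nat.cast_ne_zero.mpr this
    · exact htr
  -- hence the generalized 0-eigenspace is everything
  have htop : f.maxGenEigenspace 0 = ⊤ := by
    rw [← hsup]
    apply le_antisymm (le_iSup _ 0)
    apply iSup_le
    intro μ
    by_cases hμ : f.maxGenEigenspace μ = ⊥
    · rw [hμ]; exact bot_le
    · have : μ = 0 := hzero μ (by simpa using hμ)
      rw [this]
  -- conclude nilpotency
  have h3 : ∀ m : V, ∃ n : ℕ, (f ^ n) m = 0 := by
    intro m
    have hm : m ∈ f.maxGenEigenspace 0 := htop ▸ Submodule.mem_top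
    rw [Module.End.mem_maxGenEigenspace] at hm
    obtain ⟨n, hn⟩ := hm
    exact ⟨n, by simpa using hn⟩
  exact (LinearMap.charpoly_nilpotent_tfae f).out 0 2 |>.mpr h3

attribute [local instance 100] LieRing.ofAssociativeRing

/-- In a finite-dimensional semisimple complex Lie algebra (nondegenerate Killing form),
every reachable element `e ∈ [g_e, g_e]` is nilpotent: `ad e` is a nilpotent linear map. -/
theorem isNilpotent_ad_of_isReachable {L : Type*} [LieRing L] [LieAlgebra ℂ L]
    [FiniteDimensional ℂ L] [LieAlgebra.IsKilling ℂ L]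
    (e : L) (he : IsReachable ℂ e) :
    IsNilpotent (LieAlgebra.ad ℂ L e) := by
  set f : Module.End ℂ L := LieAlgebra.ad ℂ L e with hf
  apply aux_isNilpotent_of_trace_pow
  intro k hk
  obtain ⟨m, rfl⟩ : ∃ m, k = m + 1 := ⟨k - 1, by omega⟩
  set E : Module.End ℂ L := f ^ m with hE
  set ψ : L →ₗ[ℂ] ℂ :=
    (LinearMap.trace ℂ L) ∘ₗ (LinearMap.mulRight ℂ E) ∘ₗ (LieAlgebra.ad ℂ L : L →ₗ[ℂ] Module.End ℂ L)
    with hψ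
  have heker : e ∈ LinearMap.ker ψ := by
    refine Submodule.span_le.mpr ?_ he
    rintro z ⟨x, hx, y, hy, rfl⟩
    have hx' : ⁅x, e⁆ = 0 := hx
    have hy' : ⁅y, e⁆ = 0 := hy
    set A : Module.End ℂ L := LieAlgebra.ad ℂ L x with hA
    set B : Module.End ℂ L := LieAlgebra.ad ℂ L y with hB
    have hcy : Commute B f := by
      have h0 : ⁅B, f⁆ = 0 := by
        rw [hB, hf, ← LieHom.map_lie (f := LieAlgebra.ad ℂ L), hy', map_zero]
      rwa [Ring.lie_def, sub_eq_zero] at h0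
    have hcyE : Commute B E := hcy.pow_right m
    have had : LieAlgebra.ad ℂ L ⁅x, y⁆ = A * B - B * A := by
      rw [LieHom.map_lie (f := LieAlgebra.ad ℂ L), Ring.lie_def]
    have key : LinearMap.trace ℂ L ((B * A) * E) = LinearMap.trace ℂ L ((A * B) * E) := by
      rw [mul_assoc, LinearMap.trace_mul_comm, mul_assoc, ← hcyE.eq, ← mul_assoc]
    simp only [SetLike.mem_coe, LinearMap.mem_ker, hψ, LinearMap.coe_comp, Function.comp_apply,
      LieHom.coe_toLinearMap, LinearMap.mulRight_apply, had, sub_mul, map_sub]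
    rw [key, sub_self]
  have hψe : ψ e = 0 := heker
  have hfE : f ^ (m + 1) = f * E := by rw [hE, ← pow_succ']
  rw [hfE]
  simpa [hψ, hf] using hψe


end PaperStmt
end

section
/- Let g be a finite-dimensional complex Lie algebra, let (e,h,f) be an sl₂-triple in g, and let V be a finite-dimensional g-module. Then V is the direct sum of the eigenspaces of the action of h on V, and every eigenvalue of the action of h on V is an integer. -/
namespace PaperStmt

open LieAlgebra Module

variable (R : Type*) {L : Type*} [CommRing R] [LieRing L] [LieAlgebra R L]

/-!
Write `H, E, F` for the actions of `h, e, f`. The operator `C = H² + 2H + 4FE` (twice the Casimir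
element) commutes with `H` and `E`, so `M` is the sum of the joint generalized eigenspaces of `C`
and `H`. On `ker E` we have `Eᵏ Fᵏ = k! · H (H - 1) ⋯ (H - k + 1)` and `F` is nilpotent, so a
generalized eigenvector of `H` killed by `E` is annihilated by a separable polynomial in `H`, hence
is an eigenvector. A primitive vector of weight `n` (necessarily `n ∈ ℕ`) has `C`-eigenvalue
`n² + 2n`, so all primitive vectors in one generalized eigenspace of `C` have the same weight. For a
joint generalized eigenvector `m` of weight `μ`, induct on the least `j` with `Eʲ m = 0`: then `E m`
is an eigenvector, so `(H - μ) m` is killed by `E`; were it nonzero it would be primitive of weight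
`μ`, while the top of the `E`-string through `E m` is primitive of weight `μ + 2 + 2i`. The top of
the `E`-string through an eigenvector also shows that eigenvalues are integers.
-/

open LieModule Module.End Polynomial

theorem _root_.Polynomial.separable_descPochhammer (K : Type*) [Field K] [CharZero K] (n : ℕ) :
    (descPochhammer K n).Separable := by
  induction n with
  | zero => simp
  | succ n ih =>
    rw [descPochhammer_succ_right, ← map_natCast C]
    refine ih.mul separable_X_sub_C ((irreducible_X_sub_C _).coprime_iff_not_dvd.mpr ?_).symm
    rw [dvd_iff_isRoot, IsRoot, descPochhammer_eval_eq_descFactorial, Nat.descFactorial_self]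
    exact_mod_cast n.factorial_ne_zero

theorem _root_.Module.End.apply_eq_smul_of_mem_maxGenEigenspace_of_aeval_apply_eq_zero
    {K M : Type*} [Field K] [AddCommGroup M] [Module K M] {f : End K M} {p : K[X]}
    (hp : p.Separable) {μ : K} {m : M} (hm : m ∈ f.maxGenEigenspace μ)
    (hpm : aeval f p m = 0) : f m = μ • m := by
  obtain ⟨N, hN⟩ := (f.mem_maxGenEigenspace μ m).mp hm
  obtain ⟨q, hpq, hq⟩ := p.exists_eq_pow_rootMultiplicity_mul_and_not_dvd hp.ne_zero μ
  have hcop : IsCoprime q ((X - C μ) ^ N) :=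
    ((irreducible_X_sub_C μ).coprime_iff_not_dvd.mpr hq).pow_left.symm
  have hdN : aeval f ((X - C μ) ^ N) = (f - μ • 1) ^ N := by
    simp [Algebra.algebraMap_eq_smul_one]
  set k := p.rootMultiplicity μ
  have hy : aeval f ((X - C μ) ^ k) m = 0 := by
    refine (disjoint_ker_aeval_of_isCoprime f hcop).eq_bot.le ⟨?_, ?_⟩
    · rw [SetLike.mem_coe, LinearMap.mem_ker, ← mul_apply, ← map_mul, mul_comm, ← hpq, hpm]
    · rw [SetLike.mem_coe, LinearMap.mem_ker, ← mul_apply, ← map_mul, ← pow_add, add_comm,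
        pow_add, map_mul, mul_apply, hdN, hN, map_zero]
  obtain hk | hk : k = 0 ∨ k = 1 := by have := rootMultiplicity_le_one_of_separable hp μ; omega
  · simp_all
  · simpa [hk, sub_eq_zero, Algebra.algebraMap_eq_smul_one] using hy

section LieModule

variable {K L M : Type*} [Field K] [LieRing L] [LieAlgebra K L]
  [AddCommGroup M] [Module K M] [LieRingModule L M] [LieModule K L M]

local notation "ρ" => toEnd K L M

lemma _root_.LieModule.lie_mem_maxGenEigenspace_of_lie_eq_smul {h x : L} {c μ : K}
    (hx : ⁅h, x⁆ = c • x) {m : M} (hm : m ∈ (ρ h).maxGenEigenspace μ) :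
    ⁅x, m⁆ ∈ (ρ h).maxGenEigenspace (μ + c) := by
  have hx' : x ∈ (toEnd K L L h).maxGenEigenspace c :=
    eigenspace_le_maxGenEigenspace (mem_eigenspace_iff.mpr hx)
  rw [add_comm]
  exact lie_mem_maxGenEigenspace_toEnd hx' hm

lemma _root_.LieModule.pow_toEnd_apply_mem_maxGenEigenspace {h x : L} {c μ : K}
    (hx : ⁅h, x⁆ = c • x) {m : M} (hm : m ∈ (ρ h).maxGenEigenspace μ) (k : ℕ) :
    (ρ x ^ k) m ∈ (ρ h).maxGenEigenspace (μ + k * c) := by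
  induction k with
  | zero => simpa using hm
  | succ k ih =>
    rw [pow_succ', mul_apply, toEnd_apply_apply, Nat.cast_succ, add_one_mul, ← add_assoc]
    exact lie_mem_maxGenEigenspace_of_lie_eq_smul hx ih

lemma _root_.LieModule.exists_pow_toEnd_apply_eq_zero [CharZero K] [FiniteDimensional K M]
    {h x : L} {c μ : K} (hc : c ≠ 0) (hx : ⁅h, x⁆ = c • x) {m : M}
    (hm : m ∈ (ρ h).maxGenEigenspace μ) : ∃ k : ℕ, (ρ x ^ k) m = 0 := by
  have hfin := Submodule.finite_ne_bot_of_iSupIndep (ρ h).independent_maxGenEigenspace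
  obtain ⟨k, hk⟩ : ∃ k : ℕ, (ρ h).maxGenEigenspace (μ + k * c) = ⊥ := by
    by_contra! H
    refine Set.infinite_of_injective_forall_mem (fun i j hij ↦ ?_) H hfin
    simpa [hc] using hij
  exact ⟨k, (Submodule.mem_bot K).mp (hk ▸ pow_toEnd_apply_mem_maxGenEigenspace hx hm k)⟩

end LieModule

section IsSl2Triple

open IsSl2Triple

variable {K L M : Type*} [Field K] [LieRing L] [LieAlgebra K L]
  [AddCommGroup M] [Module K M] [LieRingModule L M] [LieModule K L M] {h e f : L}

local notation "ρ" => toEnd K L M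

lemma _root_.IsSl2Triple.lie_e_pow_succ_toEnd_f (t : IsSl2Triple h e f) (k : ℕ) (m : M) :
    ⁅e, (ρ f ^ (k + 1)) m⁆ =
      (ρ f ^ (k + 1)) ⁅e, m⁆ + (k + 1) • (ρ f ^ k) (⁅h, m⁆ - k • m) := by
  induction k generalizing m with
  | zero => simp [leibniz_lie e f m, t.lie_e_f, add_comm]
  | succ k ih =>
    have hF (j : ℕ) (x : M) : (ρ f ^ j) ⁅f, x⁆ = (ρ f ^ (j + 1)) x := by
      rw [pow_succ, mul_apply, toEnd_apply_apply]
    rw [pow_succ, mul_apply, toEnd_apply_apply, ih, leibniz_lie e f m, t.lie_e_f,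
      leibniz_lie h f m, t.lie_h_f_nsmul]
    simp only [map_add, map_sub, map_nsmul, neg_lie, nsmul_lie, map_neg, mul_apply,
      toEnd_apply_apply, hF]
    module

lemma _root_.IsSl2Triple.pow_toEnd_e_pow_toEnd_f_apply (t : IsSl2Triple h e f) {m : M}
    (hm : ⁅e, m⁆ = 0) (k : ℕ) :
    (ρ e ^ k) ((ρ f ^ k) m) = k.factorial • aeval (ρ h) (descPochhammer K k) m := by
  induction k generalizing m with
  | zero => simp
  | succ k ih =>
    have hm' : ⁅e, ⁅h, m⁆ - k • m⁆ = 0 := by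
      have := leibniz_lie h e m
      rw [hm, lie_zero, t.lie_h_e_nsmul, nsmul_lie, hm, smul_zero, zero_add] at this
      rw [lie_sub, lie_nsmul, hm, ← this, smul_zero, sub_zero]
    rw [pow_succ, mul_apply, toEnd_apply_apply, t.lie_e_pow_succ_toEnd_f, hm, map_zero, zero_add,
      map_nsmul, ih hm', descPochhammer_succ_right, map_mul, mul_apply, smul_smul,
      Nat.factorial_succ]
    simp [Module.End.natCast_apply]

lemma _root_.IsSl2Triple.lie_h_eq_smul_of_mem_maxGenEigenspace_of_lie_e_eq_zero [CharZero K]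
    [FiniteDimensional K M] (t : IsSl2Triple h e f) {μ : K} {m : M}
    (hm : m ∈ (ρ h).maxGenEigenspace μ) (he : ⁅e, m⁆ = 0) : ⁅h, m⁆ = μ • m := by
  have hf : ⁅h, f⁆ = (-2 : K) • f := by rw [neg_smul, t.lie_lie_smul_f K]
  obtain ⟨k, hk⟩ := exists_pow_toEnd_apply_eq_zero (by norm_num) hf hm
  have := t.pow_toEnd_e_pow_toEnd_f_apply (K := K) he k
  rw [hk, map_zero, eq_comm, ← Nat.cast_smul_eq_nsmul K, smul_eq_zero, Nat.cast_eq_zero] at this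
  exact apply_eq_smul_of_mem_maxGenEigenspace_of_aeval_apply_eq_zero
    (separable_descPochhammer K k) hm (this.resolve_left k.factorial_ne_zero)

lemma _root_.IsSl2Triple.exists_hasPrimitiveVectorWith_pow_toEnd_e [CharZero K]
    [FiniteDimensional K M] (t : IsSl2Triple h e f) {μ : K} {m : M} (hm₀ : m ≠ 0)
    (hm : ⁅h, m⁆ = μ • m) : ∃ i : ℕ, t.HasPrimitiveVectorWith ((ρ e ^ i) m) (μ + 2 * i) := by
  obtain ⟨k, hk⟩ := exists_pow_toEnd_apply_eq_zero two_ne_zero (t.lie_h_e_smul K)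
    (eigenspace_le_maxGenEigenspace (mem_eigenspace_iff.mpr hm))
  obtain ⟨i, hi₀, hi⟩ := Nat.exists_not_and_succ_of_not_zero_of_exists
    (p := fun n ↦ (ρ e ^ n) m = 0) (by simpa using hm₀) ⟨k, hk⟩
  exact ⟨i, hi₀, t.lie_h_pow_toEnd_e hm i, by rwa [lie_e_pow_toEnd_e]⟩

variable (K M) in
def _root_.IsSl2Triple.casimir (h e f : L) : Module.End K M :=
  ρ h * ρ h + 2 • ρ h + 4 • (ρ f * ρ e)

lemma _root_.IsSl2Triple.commute_casimir_toEnd_h (t : IsSl2Triple h e f) :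
    Commute (casimir K M h e f) (ρ h) := by
  rw [commute_iff_eq]
  ext m
  simp only [casimir, mul_apply, LinearMap.add_apply, LinearMap.smul_apply, toEnd_apply_apply,
    lie_add, lie_nsmul, leibniz_lie h f, leibniz_lie h e, t.lie_h_f_nsmul, t.lie_h_e_nsmul,
    neg_lie, nsmul_lie]
  module

lemma _root_.IsSl2Triple.commute_casimir_toEnd_e (t : IsSl2Triple h e f) :
    Commute (casimir K M h e f) (ρ e) := by
  rw [commute_iff_eq]
  ext m
  simp only [casimir, mul_apply, LinearMap.add_apply, LinearMap.smul_apply, toEnd_apply_apply,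
    lie_add, lie_nsmul, leibniz_lie e h, leibniz_lie e f, ← lie_skew e h, t.lie_h_e_nsmul,
    t.lie_e_f, neg_lie, nsmul_lie, lie_neg]
  module

lemma _root_.IsSl2Triple.HasPrimitiveVectorWith.casimir_apply {t : IsSl2Triple h e f} {m : M}
    {μ : K} (P : t.HasPrimitiveVectorWith m μ) :
    casimir K M h e f m = (μ ^ 2 + 2 * μ) • m := by
  simp only [casimir, mul_apply, LinearMap.add_apply, LinearMap.smul_apply, toEnd_apply_apply,
    P.lie_h, P.lie_e, lie_smul, lie_zero]
  module

lemma _root_.IsSl2Triple.HasPrimitiveVectorWith.eq_of_mem_maxGenEigenspace_casimir [CharZero K]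
    [FiniteDimensional K M] {t : IsSl2Triple h e f} {m m' : M} {μ μ' c : K}
    (P : t.HasPrimitiveVectorWith m μ) (P' : t.HasPrimitiveVectorWith m' μ')
    (hm : m ∈ (casimir K M h e f).maxGenEigenspace c)
    (hm' : m' ∈ (casimir K M h e f).maxGenEigenspace c) : μ = μ' := by
  have key {m : M} {μ : K} (P : t.HasPrimitiveVectorWith m μ)
      (hm : m ∈ (casimir K M h e f).maxGenEigenspace c) : c = μ ^ 2 + 2 * μ := by
    by_contra hne
    have hm₁ : m ∈ (casimir K M h e f).eigenspace (μ ^ 2 + 2 * μ) :=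
      mem_eigenspace_iff.mpr P.casimir_apply
    exact P.ne_zero ((disjoint_genEigenspace _ hne ⊤ 1).eq_bot.le ⟨hm, hm₁⟩)
  obtain ⟨n, rfl⟩ := P.exists_nat
  obtain ⟨n', rfl⟩ := P'.exists_nat
  have : n ^ 2 + 2 * n = n' ^ 2 + 2 * n' := by exact_mod_cast (key P hm).symm.trans (key P' hm')
  have hmono : StrictMono fun n : ℕ ↦ n ^ 2 + 2 * n := fun a b hab ↦ by
    dsimp only; gcongr
  rw [hmono.injective this]

lemma _root_.IsSl2Triple.lie_h_eq_smul_of_mem_maxGenEigenspace_casimir [CharZero K]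
    [FiniteDimensional K M] (t : IsSl2Triple h e f) {c μ : K} {m : M}
    (hC : m ∈ (casimir K M h e f).maxGenEigenspace c) (hH : m ∈ (ρ h).maxGenEigenspace μ) :
    ⁅h, m⁆ = μ • m := by
  obtain ⟨j, hj⟩ := exists_pow_toEnd_apply_eq_zero two_ne_zero (t.lie_h_e_smul K) hH
  induction j generalizing μ m with
  | zero => simp_all
  | succ j ih =>
    by_cases he : ⁅e, m⁆ = 0
    · exact t.lie_h_eq_smul_of_mem_maxGenEigenspace_of_lie_e_eq_zero hH he
    have heC : ⁅e, m⁆ ∈ (casimir K M h e f).maxGenEigenspace c :=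
      mapsTo_maxGenEigenspace_of_comm t.commute_casimir_toEnd_e c hC
    have heH : ⁅h, ⁅e, m⁆⁆ = (μ + 2) • ⁅e, m⁆ :=
      ih heC (lie_mem_maxGenEigenspace_of_lie_eq_smul (t.lie_h_e_smul K) hH)
        (by rwa [← toEnd_apply_apply K, ← mul_apply, ← pow_succ])
    obtain ⟨i, P⟩ := t.exists_hasPrimitiveVectorWith_pow_toEnd_e he heH
    set u := ⁅h, m⁆ - μ • m
    have hue : ⁅e, u⁆ = 0 := by
      have := leibniz_lie h e m
      rw [heH, t.lie_h_e_nsmul, nsmul_lie] at this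
      rw [lie_sub, lie_smul]
      linear_combination (norm := module) -this
    have huC : u ∈ (casimir K M h e f).maxGenEigenspace c :=
      sub_mem (mapsTo_maxGenEigenspace_of_comm t.commute_casimir_toEnd_h c hC)
        (Submodule.smul_mem _ μ hC)
    have huH : u ∈ (ρ h).maxGenEigenspace μ :=
      sub_mem (mapsTo_maxGenEigenspace_of_comm (Commute.refl _) μ hH) (Submodule.smul_mem _ μ hH)
    by_contra hne
    have Q : t.HasPrimitiveVectorWith u μ :=
      ⟨sub_ne_zero.mpr hne, t.lie_h_eq_smul_of_mem_maxGenEigenspace_of_lie_e_eq_zero huH hue,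
        hue⟩
    have := Q.eq_of_mem_maxGenEigenspace_casimir P huC
      (mapsTo_maxGenEigenspace_of_comm (t.commute_casimir_toEnd_e.pow_right i) c heC)
    have : ((2 * i + 2 : ℕ) : K) = 0 := by push_cast; linear_combination -this
    exact absurd (Nat.cast_eq_zero.mp this) (by omega)

lemma _root_.IsSl2Triple.iSup_eigenspace_toEnd_eq_top [CharZero K] [IsAlgClosed K]
    [FiniteDimensional K M] (t : IsSl2Triple h e f) : ⨆ μ, (ρ h).eigenspace μ = ⊤ := by
  have hdec := iSup_iInf_maxGenEigenspace_eq_top_of_iSup_maxGenEigenspace_eq_top_of_commute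
    ![casimir K M h e f, ρ h] (by
      intro i j _
      fin_cases i <;> fin_cases j <;>
        simp [t.commute_casimir_toEnd_h, t.commute_casimir_toEnd_h.symm])
    (fun _ ↦ iSup_maxGenEigenspace_eq_top _)
  refine eq_top_iff.mpr (hdec ▸ iSup_le fun χ ↦ le_iSup_of_le (χ 1) fun m hm ↦ ?_)
  have hm := (Submodule.mem_iInf _).mp hm
  exact mem_eigenspace_iff.mpr (t.lie_h_eq_smul_of_mem_maxGenEigenspace_casimir (hm 0) (hm 1))

lemma _root_.IsSl2Triple.exists_int_eq_of_hasEigenvalue [CharZero K] [FiniteDimensional K M]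
    (t : IsSl2Triple h e f) {μ : K} (hμ : (ρ h).HasEigenvalue μ) : ∃ k : ℤ, μ = k := by
  obtain ⟨m, hm⟩ := hμ.exists_hasEigenvector
  obtain ⟨i, P⟩ := t.exists_hasPrimitiveVectorWith_pow_toEnd_e hm.2 hm.apply_eq_smul
  obtain ⟨n, hn⟩ := P.exists_nat
  exact ⟨n - 2 * i, by push_cast; linear_combination hn⟩

end IsSl2Triple

theorem module_direct_sum_eigenspaces_and_integral_general {L : Type*} [LieRing L] [LieAlgebra ℂ L]
    {V : Type*} [AddCommGroup V] [Module ℂ V]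
    [LieRingModule L V] [LieModule ℂ L V] [FiniteDimensional ℂ V]
    (e h f : L) (t : IsSl2Triple h e f) :
    iSupIndep (fun μ : ℂ => Module.End.eigenspace (LieModule.toEnd ℂ L V h) μ) ∧
    (⨆ μ : ℂ, Module.End.eigenspace (LieModule.toEnd ℂ L V h) μ) = ⊤ ∧
    (∀ μ : ℂ, Module.End.HasEigenvalue (LieModule.toEnd ℂ L V h) μ → ∃ k : ℤ, μ = (k : ℂ)) :=
  ⟨eigenspaces_iSupIndep _, t.iSup_eigenspace_toEnd_eq_top,
    fun _ ↦ t.exists_int_eq_of_hasEigenvalue⟩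

/-- For an `sl₂`-triple `(e,h,f)` in a finite-dimensional complex Lie algebra and a
finite-dimensional module `V`, the module `V` is the direct sum of the eigenspaces of
the action of `h`, and every eigenvalue of the action of `h` on `V` is an integer. -/
theorem module_direct_sum_eigenspaces_and_integral {L : Type*} [LieRing L] [LieAlgebra ℂ L]
    [FiniteDimensional ℂ L] {V : Type*} [AddCommGroup V] [Module ℂ V]
    [LieRingModule L V] [LieModule ℂ L V] [FiniteDimensional ℂ V]
    (e h f : L) (t : IsSl2Triple h e f) :
    iSupIndep (fun μ : ℂ => Module.End.eigenspace (LieModule.toEnd ℂ L V h) μ) ∧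
    (⨆ μ : ℂ, Module.End.eigenspace (LieModule.toEnd ℂ L V h) μ) = ⊤ ∧
    (∀ μ : ℂ, Module.End.HasEigenvalue (LieModule.toEnd ℂ L V h) μ → ∃ k : ℤ, μ = (k : ℂ)) :=
  module_direct_sum_eigenspaces_and_integral_general e h f t

end PaperStmt
end

section
/- Let g be a finite-dimensional complex Lie algebra and let (e,h,f) be an sl₂-triple in g. Then the centralizer g_e is contained in the sum of the eigenspaces g(k) of ad h over nonnegative integers k; equivalently, every eigenvalue of the restriction of ad h to g_e is a nonnegative integer. -/
namespace PaperStmt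

open LieAlgebra Module

variable (R : Type*) {L : Type*} [CommRing R] [LieRing L] [LieAlgebra R L]

section Aux

open LieModule

variable {L : Type*} [LieRing L] [LieAlgebra ℂ L] [FiniteDimensional ℂ L]
variable {e h f : L}

/-- Key semisimplicity step. -/
lemma sq_step (t : IsSl2Triple h e f) {μ : ℂ} {v : L} (hv : ⁅e, v⁆ = 0)
    (hv2 : ((toEnd ℂ L L h - μ • (1 : Module.End ℂ L)) ^ 2) v = 0) :
    (toEnd ℂ L L h - μ • (1 : Module.End ℂ L)) v = 0 := by
  set A : Module.End ℂ L := toEnd ℂ L L h with hA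
  set w : L := (A - μ • 1) v with hwdef
  by_contra hw
  have hAapp : ∀ x : L, (A - μ • 1) x = ⁅h, x⁆ - μ • x := by
    intro x
    simp [hA, LinearMap.sub_apply, toEnd_apply_apply]
  have hwv : w = ⁅h, v⁆ - μ • v := by rw [hwdef, hAapp]
  have hw_h : ⁅h, w⁆ = μ • w := by
    have h0 : (A - μ • 1) w = 0 := by
      rw [hwdef, ← Module.End.mul_apply, ← sq]; exact hv2
    rw [hAapp] at h0
    exact sub_eq_zero.mp h0
  have hw_e : ⁅e, w⁆ = 0 := by
    have hl := leibniz_lie h e v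
    rw [hv, lie_zero, t.lie_h_e_nsmul] at hl
    have h1 : ⁅e, ⁅h, v⁆⁆ = 0 := by simpa [hv] using hl.symm
    rw [hwv, lie_sub, h1, lie_smul, hv, smul_zero, sub_zero]
  have P : t.HasPrimitiveVectorWith w μ := ⟨hw, hw_h, hw_e⟩
  obtain ⟨n, hn⟩ := P.exists_nat
  set F : Module.End ℂ L := toEnd ℂ L L f with hF
  set ψ : ℕ → L := fun k => (F ^ k) v with hψ
  set φ : ℕ → L := fun k => (F ^ k) w with hφ
  have hψ0v : ψ 0 = v := by simp [hψ]
  have hφ0w : φ 0 = w := by simp [hφ]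
  have hφf : ∀ k, ⁅f, φ k⁆ = φ (k + 1) := fun k => by
    simp [hφ, pow_succ', hF, toEnd_apply_apply]
  have hψf : ∀ k, ⁅f, ψ k⁆ = ψ (k + 1) := fun k => by
    simp [hψ, pow_succ', hF, toEnd_apply_apply]
  have hφh : ∀ k : ℕ, ⁅h, φ k⁆ = (μ - 2 * k) • φ k := fun k => P.lie_h_pow_toEnd_f k
  have hhv : ⁅h, v⁆ = μ • v + w := by rw [hwv]; module
  have H1 : ∀ k : ℕ, ⁅h, ψ k⁆ = (μ - 2 * k) • ψ k + φ k := by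
    intro k
    induction k with
    | zero =>
      rw [hψ0v, hφ0w, hhv]
      push_cast
      module
    | succ k ih =>
      rw [← hψf k, leibniz_lie h f, t.lie_lie_smul_f ℂ, ih]
      simp only [neg_lie, smul_lie, lie_add, lie_smul, hψf, hφf]
      push_cast
      module
  have H2 : ∀ k : ℕ, ⁅e, ψ (k + 1)⁆ = (((k : ℂ) + 1) * (μ - k)) • ψ k + ((k : ℂ) + 1) • φ k := by
    intro k
    induction k with
    | zero =>
      rw [← hψf 0, leibniz_lie e f, t.lie_e_f, hψ0v, hφ0w, hv, lie_zero, add_zero, hhv]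
      push_cast
      module
    | succ k ih =>
      rw [← hψf (k + 1), leibniz_lie e f, t.lie_e_f, H1 (k + 1), ih]
      simp only [lie_add, lie_smul, hψf, hφf]
      push_cast
      module
  have Hgen : ∀ k : ℕ, ψ k ∈ A.maxGenEigenspace (μ - 2 * k) := by
    intro k
    rw [Module.End.mem_maxGenEigenspace]
    refine ⟨2, ?_⟩
    have e1 : (A - (μ - 2 * k) • 1) (ψ k) = φ k := by
      simp only [LinearMap.sub_apply, LinearMap.smul_apply, Module.End.one_apply, hA,
        toEnd_apply_apply, H1 k]
      module
    have e2 : (A - (μ - 2 * k) • 1) (φ k) = 0 := by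
      simp only [LinearMap.sub_apply, LinearMap.smul_apply, Module.End.one_apply, hA,
        toEnd_apply_apply, hφh k]
      module
    rw [sq, Module.End.mul_apply, e1, e2]
  have Hzero : ∃ k, ψ k = 0 := by
    by_contra! contra
    have hinj : Function.Injective (fun k : ℕ => μ - 2 * (k : ℂ)) := by
      intro a b hab
      simp only [sub_right_inj] at hab
      have : (a : ℂ) = b := mul_left_cancel₀ two_ne_zero hab
      exact_mod_cast this
    have hindep := (A.independent_maxGenEigenspace).comp hinj
    have hli : LinearIndependent ℂ ψ :=
      hindep.linearIndependent _ (fun k => Hgen k) contra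
    exact absurd hli.lt_aleph0_of_finiteDimensional (by simp)
  have hψ0 : ψ 0 ≠ 0 := by
    rw [hψ0v]
    intro hv0
    exact hw (by rw [hwdef, hv0, map_zero])
  obtain ⟨m, hm1, hm2⟩ := Nat.exists_not_and_succ_of_not_zero_of_exists hψ0 Hzero
  have key : (μ - m) • ψ m + φ m = 0 := by
    have hH := H2 m
    rw [hm2, lie_zero] at hH
    have h0 : ((m : ℂ) + 1) • ((μ - m) • ψ m + φ m) = 0 := by
      linear_combination (norm := module) -hH
    exact (smul_eq_zero_iff_right (Nat.cast_add_one_ne_zero m)).mp h0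
  rcases le_or_gt m n with hmn | hnm
  · have hφm : φ m ≠ 0 := P.pow_toEnd_f_ne_zero_of_eq_nat hn hmn
    have t1 : ⁅h, (μ - m) • ψ m + φ m⁆
        = (μ - m) • ((μ - 2 * m) • ψ m + φ m) + (μ - 2 * m) • φ m := by
      rw [lie_add, lie_smul, H1 m, hφh m]
    rw [key, lie_zero] at t1
    have t2 : (μ - 2 * m) • ((μ - m) • ψ m + φ m) = 0 := by rw [key, smul_zero]
    have happ : (μ - m) • φ m = 0 := by
      linear_combination (norm := module) -t1 - t2
    rcases smul_eq_zero.mp happ with hc | hc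
    · rw [sub_eq_zero] at hc
      rw [← hc, sub_self, zero_smul, zero_add] at key
      exact hφm key
    · exact hφm hc
  · have hφm : φ m = 0 := by
      have hsplit : m = (m - (n + 1)) + (n + 1) := by omega
      have hstep : (F ^ (m - (n + 1))) (φ (n + 1)) = φ m := by
        simp only [hφ, ← Module.End.mul_apply, ← pow_add]
        rw [Nat.sub_add_cancel (by omega)]
      have h0 : φ (n + 1) = 0 := by
        simp only [hφ]
        exact P.pow_toEnd_f_eq_zero_of_eq_nat hn
      rw [← hstep, h0, map_zero]
    rw [hφm, add_zero, smul_eq_zero] at key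
    rcases key with hc | hc
    · rw [sub_eq_zero, hn] at hc
      exact absurd (Nat.cast_injective hc) (by omega)
    · exact hm1 hc

lemma pow_step (t : IsSl2Triple h e f) {μ : ℂ} : ∀ (k : ℕ) (x : L), ⁅x, e⁆ = 0 →
    ((toEnd ℂ L L h - μ • (1 : Module.End ℂ L)) ^ k) x = 0 →
    (toEnd ℂ L L h - μ • (1 : Module.End ℂ L)) x = 0 := by
  intro k
  induction k with
  | zero =>
    intro x _ hx0
    simp only [pow_zero, Module.End.one_apply] at hx0
    rw [hx0, map_zero]
  | succ k ih =>
    intro x hx hpow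
    set A : Module.End ℂ L := toEnd ℂ L L h with hA
    have hAapp : ∀ z : L, (A - μ • 1) z = ⁅h, z⁆ - μ • z := by
      intro z
      simp [hA, LinearMap.sub_apply, toEnd_apply_apply]
    set y : L := (A - μ • 1) x with hydef
    have hy_e : ⁅y, e⁆ = 0 := by
      have hl := leibniz_lie h x e
      rw [hx, lie_zero, t.lie_h_e_nsmul] at hl
      have h1 : ⁅⁅h, x⁆, e⁆ = 0 := by
        have h2 : ⁅x, 2 • e⁆ = 0 := by rw [lie_nsmul, hx, smul_zero]
        rw [h2, add_zero] at hl
        exact hl.symm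
      rw [hydef, hAapp, sub_lie, smul_lie, h1, hx, smul_zero, sub_zero]
    have hpow' : ((A - μ • 1) ^ k) y = 0 := by
      rw [hydef, ← Module.End.mul_apply, ← pow_succ]
      exact hpow
    have hy0 := ih y hy_e hpow'
    have hsq : ((A - μ • (1 : Module.End ℂ L)) ^ 2) x = 0 := by
      rw [sq, Module.End.mul_apply]
      exact hy0
    exact sq_step t (by rw [← lie_skew, hx, neg_zero]) hsq

lemma main_aux (e h f : L) (t : IsSl2Triple h e f)
    (V : Submodule ℂ L) (hVdef : ∀ x : L, x ∈ V ↔ ⁅x, e⁆ = 0) :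
    V ≤ ⨆ k : ℕ, Module.End.eigenspace (LieAlgebra.ad ℂ L h) ((k : ℤ) : ℂ) := by
  intro x hx
  have hV : ∀ y : L, y ∈ V → toEnd ℂ L L h y ∈ V := by
    intro y hy
    rw [hVdef] at hy ⊢
    have hl := leibniz_lie h y e
    rw [hy, lie_zero, t.lie_h_e_nsmul, lie_nsmul, hy, smul_zero, add_zero] at hl
    simpa [toEnd_apply_apply] using hl.symm
  set B : Module.End ℂ V := (toEnd ℂ L L h).restrict hV with hB
  have htop := Module.End.iSup_maxGenEigenspace_eq_top B
  have hxmem : (⟨x, hx⟩ : V) ∈ ⨆ μ : ℂ, B.maxGenEigenspace μ := htop ▸ Submodule.mem_top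
  have main := Submodule.iSup_induction (motive := fun z : V =>
      (z : L) ∈ ⨆ k : ℕ, Module.End.eigenspace (LieAlgebra.ad ℂ L h) ((k : ℤ) : ℂ))
      (fun μ : ℂ => B.maxGenEigenspace μ) hxmem ?_ ?_ ?_
  · exact main
  · intro μ z hz
    have hz1 : z ∈ Module.End.genEigenspace B μ ⊤ := hz
    rw [hB, Module.End.genEigenspace_restrict (toEnd ℂ L L h) V ⊤ μ hV] at hz1
    have hz' : (z : L) ∈ Module.End.genEigenspace (toEnd ℂ L L h) μ ⊤ := hz1
    obtain ⟨k, hk⟩ := Module.End.mem_genEigenspace_top.mp hz'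
    have hze : ⁅(z : L), e⁆ = 0 := (hVdef _).mp z.2
    have hzh := pow_step t k (z : L) hze hk
    by_cases hz0 : (z : L) = 0
    · rw [hz0]; exact zero_mem _
    · have hlh : ⁅h, (z : L)⁆ = μ • (z : L) := by
        have : ⁅h, (z : L)⁆ - μ • (z : L) = 0 := by
          simpa [LinearMap.sub_apply, toEnd_apply_apply] using hzh
        exact sub_eq_zero.mp this
      have hP : t.HasPrimitiveVectorWith (z : L) μ :=
        ⟨hz0, hlh, by rw [← lie_skew, hze, neg_zero]⟩
      obtain ⟨n, hn⟩ := hP.exists_nat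
      apply Submodule.mem_iSup_of_mem n
      rw [Module.End.mem_eigenspace_iff, LieAlgebra.ad_apply, hlh, hn]
      norm_num
  · exact zero_mem _
  · intro y z hy hz
    simpa using Submodule.add_mem _ hy hz

end Aux

/-- For an `sl₂`-triple `(e,h,f)` in a finite-dimensional complex Lie algebra, the
centralizer `g_e` is contained in the sum of the eigenspaces `g(k)` of `ad h` over
nonnegative integers `k`. -/
theorem centralizer_le_sum_nonneg_gradePieces {L : Type*} [LieRing L] [LieAlgebra ℂ L]
    [FiniteDimensional ℂ L] (e h f : L) (t : IsSl2Triple h e f) :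
    (centralizerOf ℂ e).toSubmodule ≤ ⨆ k : ℕ, gradePiece ℂ h (k : ℤ) := by
  have := main_aux e h f t (centralizerOf ℂ e).toSubmodule (fun x => Iff.rfl)
  simpa only [gradePiece] using this

end PaperStmt
end

section
/- Let g be a finite-dimensional complex Lie algebra and let (e,h,f) be an sl₂-triple in g. Assume that (i) [g(0)_e, g(0)_e] = g(0)_e, (ii) [g(0)_e, g(1)_e] = g(1)_e, and (iii) the Lie subalgebra of g generated by g(1)_e equals g(≥1)_e. Then the centralizer g_e is perfect: [g_e, g_e] = g_e. -/
namespace PaperStmt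

open LieAlgebra Module

variable (R : Type*) {L : Type*} [CommRing R] [LieRing L] [LieAlgebra R L]

section Aux

variable {L : Type*} [LieRing L] [LieAlgebra ℂ L]

lemma cent_invariant {e h f : L} (t : IsSl2Triple h e f) {x : L} (hx : ⁅x, e⁆ = 0) :
    ⁅⁅h, x⁆, e⁆ = 0 := by
  have h1 : ⁅⁅h, x⁆, e⁆ = ⁅h, ⁅x, e⁆⁆ - ⁅x, ⁅h, e⁆⁆ := by rw [lie_lie]
  rw [h1, hx, t.lie_h_e_smul ℂ, lie_zero, lie_smul, hx, smul_zero, sub_zero]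

lemma jordan_aux [FiniteDimensional ℂ L] {e h f : L} (t : IsSl2Triple h e f) (n : ℕ) (x y : L)
    (hy0 : y ≠ 0) (hye : ⁅e, y⁆ = 0) (hxe : ⁅e, x⁆ = 0)
    (hhy : ⁅h, y⁆ = (n : ℂ) • y) (hhx : ⁅h, x⁆ = (n : ℂ) • x + y) : False := by
  have P : t.HasPrimitiveVectorWith y (n : ℂ) := ⟨hy0, hhy, hye⟩
  set F := LieModule.toEnd ℂ L L f with hF
  let u : ℕ → L := fun i => (F ^ i) x
  let v : ℕ → L := fun i => (F ^ i) y
  have hu_succ : ∀ i, ⁅f, u i⁆ = u (i + 1) := fun i => by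
    simp [u, pow_succ', hF]
  have hv_succ : ∀ i, ⁅f, v i⁆ = v (i + 1) := fun i => P.lie_f_pow_toEnd_f i
  have hv1 : ∀ i : ℕ, ⁅h, v i⁆ = ((n : ℂ) - 2 * i) • v i := fun i => P.lie_h_pow_toEnd_f i
  have hv2 : ∀ i : ℕ, ⁅e, v (i + 1)⁆ = (((i : ℂ) + 1) * ((n : ℂ) - i)) • v i := fun i =>
    P.lie_e_pow_succ_toEnd_f i
  have hvn : v n ≠ 0 := P.pow_toEnd_f_ne_zero_of_eq_nat rfl le_rfl
  have hv0 : ∀ k, n + 1 ≤ k → v k = 0 := by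
    intro k hk
    obtain ⟨j, rfl⟩ := Nat.exists_eq_add_of_le hk
    have h1 : v (n + 1) = 0 := P.pow_toEnd_f_eq_zero_of_eq_nat rfl
    show (F ^ (n + 1 + j)) y = 0
    rw [add_comm (n+1) j, pow_add, Module.End.mul_apply]
    rw [show (F ^ (n + 1)) y = v (n+1) from rfl, h1, map_zero]
  have hA : ∀ i : ℕ, ⁅h, u i⁆ = ((n : ℂ) - 2 * i) • u i + v i := by
    intro i
    induction i with
    | zero => simpa [u, v] using hhx
    | succ i ih =>
      rw [← hu_succ i, leibniz_lie, t.lie_lie_smul_f ℂ, ih, lie_add, lie_smul, hu_succ i,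
        hv_succ i, neg_lie, smul_lie, hu_succ i]
      push_cast
      module
  have hB : ∀ i : ℕ, ⁅e, u (i + 1)⁆ = (((i : ℂ) + 1) * ((n : ℂ) - i)) • u i
      + ((i : ℂ) + 1) • v i := by
    intro i
    induction i with
    | zero =>
      have hu0 : u 0 = x := by simp [u]
      have hv00 : v 0 = y := by simp [v]
      rw [← hu_succ 0, hu0, leibniz_lie, t.lie_e_f, hxe, lie_zero, add_zero, hhx, hv00]
      push_cast
      module
    | succ i ih =>
      rw [← hu_succ (i + 1), leibniz_lie, t.lie_e_f, ih, hA (i + 1), lie_add, lie_smul, lie_smul,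
        hu_succ i, hv_succ i]
      push_cast
      module
  have hu_ne : ∀ j : ℕ, u (n + 1 + j) ≠ 0 := by
    intro j
    induction j with
    | zero =>
      intro hcon
      have h1 := hB n
      rw [show n + 1 + 0 = n + 1 from rfl] at hcon
      rw [hcon, lie_zero, sub_self, mul_zero, zero_smul, zero_add] at h1
      exact hvn (smul_eq_zero_iff_right (Nat.cast_add_one_ne_zero n) |>.mp h1.symm)
    | succ j ih =>
      intro hcon
      have h1 := hB (n + 1 + j)
      rw [show n + 1 + j + 1 = n + 1 + (j + 1) from rfl, hcon, lie_zero,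
        hv0 (n + 1 + j) (by omega), smul_zero, add_zero] at h1
      have hc : (((n + 1 + j : ℕ) : ℂ) + 1) * ((n : ℂ) - ((n + 1 + j : ℕ) : ℂ)) ≠ 0 := by
        have hc1 : (((n + 1 + j : ℕ) : ℂ) + 1) ≠ 0 := Nat.cast_add_one_ne_zero _
        have hc2 : ((n : ℂ) - ((n + 1 + j : ℕ) : ℂ)) ≠ 0 := by
          intro hc0
          apply Nat.cast_add_one_ne_zero (R := ℂ) j
          push_cast at hc0 ⊢
          linear_combination -hc0
        exact mul_ne_zero hc1 hc2
      exact ih (smul_eq_zero_iff_right hc |>.mp h1.symm)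
  -- the `u (n+1+j)` are eigenvectors with distinct eigenvalues: contradiction with fin dim
  have hev : ∀ j : ℕ, (LieModule.toEnd ℂ L L h).HasEigenvector
      ((n : ℂ) - 2 * ((n + 1 + j : ℕ) : ℂ)) (u (n + 1 + j)) := by
    intro j
    refine Module.End.hasEigenvector_iff.mpr ⟨Module.End.mem_eigenspace_iff.mpr ?_, hu_ne j⟩
    have := hA (n + 1 + j)
    rw [hv0 (n + 1 + j) (by omega), add_zero] at this
    simpa using this
  have hinj : Function.Injective fun j : ℕ => (n : ℂ) - 2 * ((n + 1 + j : ℕ) : ℂ) := by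
    intro a b hab
    simp only at hab
    push_cast at hab
    have : (a : ℂ) = b := by linear_combination -hab / 2
    exact_mod_cast this
  have hli : LinearIndependent ℂ fun j : ℕ => u (n + 1 + j) :=
    Module.End.eigenvectors_linearIndependent' (LieModule.toEnd ℂ L L h)
      (fun j : ℕ => (n : ℂ) - 2 * ((n + 1 + j : ℕ) : ℂ)) hinj _ hev
  have hfin := (hli.comp (Fin.val : Fin (Module.finrank ℂ L + 1) → ℕ)
    Fin.val_injective).fintype_card_le_finrank
  simp at hfin

lemma eig_of_gen [FiniteDimensional ℂ L] {e h f : L} (t : IsSl2Triple h e f) (μ : ℂ) :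
    ∀ (m : ℕ) (x : L), ⁅x, e⁆ = 0 →
      (((LieAlgebra.ad ℂ L h) - μ • 1) ^ m) x = 0 → ⁅h, x⁆ = μ • x := by
  intro m
  induction m with
  | zero =>
    intro x _ hx
    simp only [pow_zero, Module.End.one_apply] at hx
    simp [hx]
  | succ m ih =>
    intro x hxe hx
    set y := ((LieAlgebra.ad ℂ L h) - μ • 1) x with hy
    have hyval : y = ⁅h, x⁆ - μ • x := by
      simp [hy, LieAlgebra.ad_apply]
    have hy_pow : (((LieAlgebra.ad ℂ L h) - μ • 1) ^ m) y = 0 := by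
      rw [pow_succ, Module.End.mul_apply] at hx
      exact hx
    have hye : ⁅y, e⁆ = 0 := by
      rw [hyval, sub_lie, smul_lie, hxe, smul_zero, cent_invariant t hxe, sub_zero]
    have hhy : ⁅h, y⁆ = μ • y := ih y hye hy_pow
    by_cases hy0 : y = 0
    · rw [hyval] at hy0
      linear_combination (norm := module) hy0
    · have P : t.HasPrimitiveVectorWith y μ :=
        ⟨hy0, hhy, by rw [← lie_skew, hye, neg_zero]⟩
      obtain ⟨k, hk⟩ := P.exists_nat
      subst hk
      exact absurd (jordan_aux t k x y hy0 (by rw [← lie_skew, hye, neg_zero])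
        (by rw [← lie_skew, hxe, neg_zero]) hhy
        (by rw [hyval] at *; linear_combination (norm := module))) not_false

end Aux


/-- Let `(e,h,f)` be an `sl₂`-triple in a finite-dimensional complex Lie algebra.
If `[g(0)_e, g(0)_e] = g(0)_e`, `[g(0)_e, g(1)_e] = g(1)_e`, and the Lie subalgebra
generated by `g(1)_e` equals `g(≥1)_e`, then the centralizer `g_e` is perfect. -/
theorem centralizer_perfect {L : Type*} [LieRing L] [LieAlgebra ℂ L]
    [FiniteDimensional ℂ L] (e h f : L) (t : IsSl2Triple h e f)
    (h0 : bracketSpan ℂ (gradePieceCent ℂ e h 0) (gradePieceCent ℂ e h 0)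
        = gradePieceCent ℂ e h 0)
    (h1 : bracketSpan ℂ (gradePieceCent ℂ e h 0) (gradePieceCent ℂ e h 1)
        = gradePieceCent ℂ e h 1)
    (hgen : (LieSubalgebra.lieSpan ℂ L (gradePieceCent ℂ e h 1 : Set L)).toSubmodule
        = gradeGeOneCent ℂ e h) :
    derivedOf ℂ (centralizerOf ℂ e) = (centralizerOf ℂ e).toSubmodule := by
  classical
  set c := (centralizerOf ℂ e).toSubmodule with hc
  set Q := derivedOf ℂ (centralizerOf ℂ e) with hQdef
  have hQc : Q ≤ c := by
    rw [hQdef, derivedOf, bracketSpan]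
    rw [Submodule.span_le]
    rintro z ⟨a, ha, b, hb, rfl⟩
    exact (centralizerOf ℂ e).lie_mem ha hb
  have hg : ∀ A B : Submodule ℂ L, A ≤ c → B ≤ c → bracketSpan ℂ A B ≤ Q := by
    intro A B hA hB
    apply Submodule.span_mono
    rintro z ⟨a, ha, b, hb, rfl⟩
    exact ⟨a, hA ha, b, hB hb, rfl⟩
  have hg0Q : gradePieceCent ℂ e h 0 ≤ Q := by
    rw [← h0]; exact hg _ _ inf_le_right inf_le_right
  have hg1Q : gradePieceCent ℂ e h 1 ≤ Q := by
    rw [← h1]; exact hg _ _ inf_le_right inf_le_right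
  have hKlie : ∀ {a b : L}, a ∈ Q → b ∈ Q → ⁅a, b⁆ ∈ Q := by
    intro a b ha hb
    exact Submodule.subset_span ⟨a, hQc ha, b, hQc hb, rfl⟩
  let K : LieSubalgebra ℂ L := { Q with lie_mem' := fun {a b} ha hb => hKlie ha hb }
  have hge1 : gradeGeOneCent ℂ e h ≤ Q := by
    rw [← hgen]
    have hsub : LieSubalgebra.lieSpan ℂ L (gradePieceCent ℂ e h 1 : Set L) ≤ K :=
      LieSubalgebra.lieSpan_le.mpr (fun w hw => hg1Q hw)
    exact fun z hz => hsub hz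
  refine le_antisymm hQc ?_
  -- now show c ≤ Q
  intro x hxc
  have hinv : ∀ z ∈ c, (LieAlgebra.ad ℂ L h) z ∈ c := by
    intro z hz
    exact cent_invariant t hz
  set H' : Module.End ℂ c := (LieAlgebra.ad ℂ L h).restrict hinv with hH'
  have hx' : (⟨x, hxc⟩ : c) ∈ ⨆ μ, H'.maxGenEigenspace μ := by
    rw [Module.End.iSup_maxGenEigenspace_eq_top]; trivial
  have key : ∀ (μ' : ℂ) (m : ℕ) (w : c),
      ((((H' - μ' • 1) ^ m) w : c) : L) = (((LieAlgebra.ad ℂ L h) - μ' • 1) ^ m) (w : L) := by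
    intro μ' m
    induction m with
    | zero => intro w; simp
    | succ m ih =>
      intro w
      rw [pow_succ, pow_succ, Module.End.mul_apply, Module.End.mul_apply, ih]
      congr 1
  refine Submodule.iSup_induction (p := fun μ => H'.maxGenEigenspace μ)
    (motive := fun z : c => (z : L) ∈ Q) hx' ?_ (by simp) ?_
  · intro μ z hz
    obtain ⟨m, hm⟩ := (Module.End.mem_maxGenEigenspace _ _ _).mp hz
    have hz_e : ⁅(z : L), e⁆ = 0 := z.2
    have hgen0 : (((LieAlgebra.ad ℂ L h) - μ • 1) ^ m) (z : L) = 0 := by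
      rw [← key μ m z, hm, Submodule.coe_zero]
    have heig : ⁅h, (z : L)⁆ = μ • (z : L) := eig_of_gen t μ m (z : L) hz_e hgen0
    by_cases hz0 : (z : L) = 0
    · rw [hz0]; exact Q.zero_mem
    · have P : t.HasPrimitiveVectorWith (z : L) μ :=
        ⟨hz0, heig, by rw [← lie_skew, hz_e, neg_zero]⟩
      obtain ⟨n, rfl⟩ := P.exists_nat
      have hmem : (z : L) ∈ gradePieceCent ℂ e h (n : ℤ) := by
        rw [gradePieceCent, Submodule.mem_inf]
        refine ⟨?_, hz_e⟩
        rw [gradePiece, Module.End.mem_eigenspace_iff, LieAlgebra.ad_apply, heig]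
        norm_cast
      rcases Nat.eq_zero_or_pos n with hn | hn
      · subst hn
        exact hg0Q (by exact_mod_cast hmem)
      · refine hge1 ?_
        have hle : gradePieceCent ℂ e h (n : ℤ) ≤ gradeGeOneCent ℂ e h := by
          refine le_trans (le_of_eq rfl) ?_
          exact le_iSup₂ (f := fun k (_ : k ∈ {k : ℤ | 1 ≤ k}) => gradePieceCent ℂ e h k)
            (n : ℤ) (show (1:ℤ) ≤ (n:ℤ) by exact_mod_cast hn)
        exact hle hmem
  · intro a b ha hb
    simpa using Q.add_mem ha hb


end PaperStmt
end
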